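/- Fix a thin family 𝓕 of finite subsets of ℕ. For every infinite M ⊆ ℕ and every finite S, there exists an infinite N ⊆ M such that N decides every subset of S. -/
import Mathlib


/-- `S` is an initial segment of `T` (finite sets identified with increasing enumerations). -/
def InitSeg (S T : Finset ℕ) : Prop :=
  ∃ S2 : Finset ℕ, T = S ∪ S2 ∧ ∀ a ∈ S, ∀ b ∈ S2, a < b

/-- A family of finite sets is thin: no member is a proper initial segment of another. -/
def ThinFam (F : Set (Finset ℕ)) : Prop :=
  ∀ S ∈ F, ∀ T ∈ F, InitSeg S T → S = T

/-- Two finite sets are comparable if one is an initial segment of the other. -/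
def Comparable (s t : Finset ℕ) : Prop := InitSeg s t ∨ InitSeg t s

/-- `B` accepts `S` (with respect to `F`): some `t ∈ F` comparable with `S`
satisfies `t ∖ S ⊆ B`. -/
def Accepts (F : Set (Finset ℕ)) (S : Finset ℕ) (B : Set ℕ) : Prop :=
  ∃ t ∈ F, Comparable t S ∧ ((t \ S : Finset ℕ) : Set ℕ) ⊆ B

/-- `B` rejects `S`: `B` does not accept `S`. -/
def Rejects (F : Set (Finset ℕ)) (S : Finset ℕ) (B : Set ℕ) : Prop :=
  ¬ Accepts F S B

/-- `B` strongly accepts `S`: every infinite subset of `B` accepts `S`. -/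
def StronglyAccepts (F : Set (Finset ℕ)) (S : Finset ℕ) (B : Set ℕ) : Prop :=
  ∀ C ⊆ B, C.Infinite → Accepts F S C

/-- `B` decides `S`: `B` rejects `S` or strongly accepts `S`. -/
def Decides (F : Set (Finset ℕ)) (S : Finset ℕ) (B : Set ℕ) : Prop :=
  Rejects F S B ∨ StronglyAccepts F S B

lemma accepts_mono (F : Set (Finset ℕ)) (T : Finset ℕ) {C B : Set ℕ} (h : C ⊆ B)
    (ha : Accepts F T C) : Accepts F T B := by
  obtain ⟨t, ht, hc, hs⟩ := ha
  exact ⟨t, ht, hc, hs.trans h⟩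

lemma decides_mono (F : Set (Finset ℕ)) (T : Finset ℕ) {N B : Set ℕ} (h : N ⊆ B)
    (hd : Decides F T B) : Decides F T N := by
  rcases hd with hr | hs
  · exact Or.inl fun ha => hr (accepts_mono F T h ha)
  · exact Or.inr fun C hC hCi => hs C (hC.trans h) hCi

lemma decide_single (F : Set (Finset ℕ)) (T : Finset ℕ) (B : Set ℕ) (hBi : B.Infinite) :
    ∃ N ⊆ B, N.Infinite ∧ Decides F T N := by
  by_cases h : ∃ C ⊆ B, C.Infinite ∧ Rejects F T C
  · obtain ⟨C, hCB, hCi, hCr⟩ := h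
    exact ⟨C, hCB, hCi, Or.inl hCr⟩
  · push_neg at h
    refine ⟨B, le_refl B, hBi, Or.inr fun C hC hCi => ?_⟩
    have := h C hC hCi
    unfold Rejects at this
    exact not_not.mp this

/-- For every infinite `M` and finite `S` there is an infinite `N ⊆ M` deciding
every subset of `S`. -/
theorem exists_infinite_decides_finite (F : Set (Finset ℕ)) (hF : ThinFam F)
    (M : Set ℕ) (hM : M.Infinite) (S : Finset ℕ) :
    ∃ N ⊆ M, N.Infinite ∧ ∀ T ⊆ S, Decides F T N := by
  have hmain : ∀ 𝒯 : Finset (Finset ℕ), ∀ B : Set ℕ, B ⊆ M → B.Infinite →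
      ∃ N ⊆ B, N.Infinite ∧ ∀ T ∈ 𝒯, Decides F T N := by
    intro 𝒯
    induction 𝒯 using Finset.induction_on with
    | empty => exact fun B hB hBi => ⟨B, le_refl B, hBi, fun T hT => absurd hT (by simp)⟩
    | @insert T 𝒯' hT ih =>
      intro B hB hBi
      obtain ⟨N0, hN0B, hN0i, hN0⟩ := ih B hB hBi
      obtain ⟨N1, hN1N0, hN1i, hdec⟩ := decide_single F T N0 hN0i
      refine ⟨N1, hN1N0.trans hN0B, hN1i, fun T' hT' => ?_⟩
      rcases Finset.mem_insert.mp hT' with rfl | h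
      · exact hdec
      · exact decides_mono F T' hN1N0 (hN0 T' h)
  obtain ⟨N, hNM, hNi, hN⟩ := hmain S.powerset M (le_refl M) hM
  exact ⟨N, hNM, hNi, fun T hT => hN T (Finset.mem_powerset.mpr hT)⟩
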